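/- arXiv:1009.0861 — 2 statements merged into one kernel-verified Lean document; each statement's English description precedes it below -/
import Mathlib

section
/- Define γ(A) = max_{1≤i≤n} ‖P_A e_i‖². Let X₁ be an n×l matrix, x ∈ ℝⁿ with x⊥ = (I − P_{X₁})x ≠ 0, z = x⊥/‖x⊥‖, and X₁' = [X₁ x]. Then 0 ≤ γ(X₁') − γ(X₁) ≤ γ(z) = max_i z_i². -/
open Matrix

noncomputable section

/-- Column span of a matrix: span of its columns in ℝⁿ. -/
def colSpan {n l : ℕ} (A : Matrix (Fin n) (Fin l) ℝ) : Submodule ℝ (Fin n → ℝ) :=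
  Submodule.span ℝ (Set.range A.transpose)

/-- `P` is the orthogonal projection matrix onto the subspace `S`. -/
def IsProjOnto {n : ℕ} (P : Matrix (Fin n) (Fin n) ℝ) (S : Submodule ℝ (Fin n → ℝ)) : Prop :=
  P.IsSymm ∧ P * P = P ∧ LinearMap.range P.mulVecLin = S

/-- γ(P) = max_i ‖P e_i‖² (squared Euclidean norm of i-th column of P). -/
def gamma {n : ℕ} (P : Matrix (Fin n) (Fin n) ℝ) : ℝ :=
  ⨆ i : Fin n, ∑ j, (P.mulVec (Pi.single i 1) j) ^ 2

/-- The matrix obtained by appending the column `x` to `A`. -/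
def appendCol {n l : ℕ} (A : Matrix (Fin n) (Fin l) ℝ) (x : Fin n → ℝ) :
    Matrix (Fin n) (Fin (l + 1)) ℝ :=
  Matrix.of fun i j => Fin.lastCases (x i) (fun k => A i k) j

/-! Adjoining `x` to the columns of `X₁` adjoins the unit vector `z` in the direction of
`x - P x`, which is orthogonal to the range of `P`; hence `P' = P + z zᵀ` (a Gram–Schmidt
step). For a symmetric idempotent matrix `‖P eᵢ‖² = Pᵢᵢ`, so `γ(P')` is the maximum of
`Pᵢᵢ + zᵢ²` and both bounds follow. -/

theorem Submodule.sup_span_singleton_eq_of_sub_mem {R M : Type*} [Ring R] [AddCommGroup M]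
    [Module R M] {S : Submodule R M} {x y : M} (h : x - y ∈ S) :
    S ⊔ R ∙ x = S ⊔ R ∙ y := by
  have key : ∀ {u v : M}, u - v ∈ S → S ⊔ R ∙ u ≤ S ⊔ R ∙ v := fun {u v} huv =>
    sup_le le_sup_left <| (Submodule.span_singleton_le_iff_mem _ _).2 <| by
      simpa using Submodule.add_mem_sup huv (Submodule.mem_span_singleton_self v)
  exact le_antisymm (key h) (key (by simpa using S.neg_mem h))

theorem Real.iSup_add_le_add_iSup {ι : Type*} [Finite ι] (f g : ι → ℝ) :
    ⨆ i, (f i + g i) ≤ (⨆ i, f i) + ⨆ i, g i := by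
  cases isEmpty_or_nonempty ι
  · simp
  · exact ciSup_le fun i =>
      add_le_add (le_ciSup (Finite.bddAbove_range f) i) (le_ciSup (Finite.bddAbove_range g) i)

theorem inv_sqrt_sum_sq_smul_dotProduct_self {ι : Type*} [Fintype ι] {v : ι → ℝ} (hv : v ≠ 0) :
    ((√(∑ i, v i ^ 2))⁻¹ • v) ⬝ᵥ ((√(∑ i, v i ^ 2))⁻¹ • v) = 1 := by
  have hvv : v ⬝ᵥ v = ∑ i, v i ^ 2 := by simp only [dotProduct, sq]
  have hpos : 0 < ∑ i, v i ^ 2 :=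
    lt_of_le_of_ne (by positivity) (Ne.symm (hvv ▸ dotProduct_self_eq_zero.not.2 hv))
  simp only [smul_dotProduct, dotProduct_smul, smul_eq_mul, hvv]
  field_simp
  exact (Real.sq_sqrt hpos.le).symm

theorem colSpan_appendCol {n l : ℕ} (A : Matrix (Fin n) (Fin l) ℝ) (x : Fin n → ℝ) :
    colSpan (appendCol A x) = colSpan A ⊔ ℝ ∙ x := by
  have hrange : Set.range (appendCol A x)ᵀ = insert x (Set.range Aᵀ) := by
    ext y
    change (∃ j, (appendCol A x)ᵀ j = y) ↔ y = x ∨ ∃ k, Aᵀ k = y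
    rw [Fin.exists_fin_succ', or_comm, eq_comm]
    simp [appendCol, funext_iff, transpose_apply]
  rw [colSpan, hrange, Submodule.span_insert, sup_comm, colSpan]

namespace IsProjOnto

variable {n : ℕ} {P Q : Matrix (Fin n) (Fin n) ℝ} {S : Submodule ℝ (Fin n → ℝ)}

theorem mulVec_mem (hP : IsProjOnto P S) (v : Fin n → ℝ) : P *ᵥ v ∈ S :=
  hP.2.2 ▸ ⟨v, rfl⟩

theorem mulVec_eq_self (hP : IsProjOnto P S) {v : Fin n → ℝ} (hv : v ∈ S) : P *ᵥ v = v := by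
  rw [← hP.2.2] at hv
  obtain ⟨w, rfl⟩ := hv
  rw [mulVecLin_apply, mulVec_mulVec, hP.2.1]

theorem of_mulVec (hQ : Q.IsSymm) (hmem : ∀ v, Q *ᵥ v ∈ S) (hfix : ∀ v ∈ S, Q *ᵥ v = v) :
    IsProjOnto Q S := by
  refine ⟨hQ, ext_iff_mulVec.2 fun v => ?_, le_antisymm ?_ fun v hv => ⟨v, hfix v hv⟩⟩
  · rw [← mulVec_mulVec, hfix _ (hmem v)]
  · rintro _ ⟨v, rfl⟩
    exact hmem v

theorem mul_eq_right (hP : IsProjOnto P S) (hQ : IsProjOnto Q S) : P * Q = Q :=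
  ext_iff_mulVec.2 fun v => by rw [← mulVec_mulVec, hP.mulVec_eq_self (hQ.mulVec_mem v)]

theorem unique (hP : IsProjOnto P S) (hQ : IsProjOnto Q S) : P = Q := by
  calc P = (Q * P)ᵀ := by rw [hQ.mul_eq_right hP, hP.1.eq]
    _ = P * Q := by rw [transpose_mul, hP.1.eq, hQ.1.eq]
    _ = Q := hP.mul_eq_right hQ

theorem sum_sq_mulVec_single (hP : IsProjOnto P S) (i : Fin n) :
    ∑ j, (P *ᵥ Pi.single i 1) j ^ 2 = P i i := by
  calc ∑ j, (P *ᵥ Pi.single i 1) j ^ 2 = ∑ j, P i j * P j i := by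
        refine Finset.sum_congr rfl fun j _ => ?_
        rw [mulVec_single_one, col_apply, sq, hP.1.apply i j]
    _ = P i i := by rw [← mul_apply, hP.2.1]

theorem gamma_eq_iSup_diag (hP : IsProjOnto P S) : gamma P = ⨆ i, P i i :=
  iSup_congr hP.sum_sq_mulVec_single

theorem add_vecMulVec (hP : IsProjOnto P S) {z : Fin n → ℝ} (hz : z ⬝ᵥ z = 1)
    (hPz : P *ᵥ z = 0) : IsProjOnto (P + vecMulVec z z) (S ⊔ ℝ ∙ z) := by
  have hQv : ∀ v, (P + vecMulVec z z) *ᵥ v = P *ᵥ v + (z ⬝ᵥ v) • z := fun v => by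
    rw [add_mulVec, vecMulVec_mulVec, op_smul_eq_smul]
  have hzS : ∀ v ∈ S, z ⬝ᵥ v = 0 := fun v hv => by
    rw [← hP.mulVec_eq_self hv, dotProduct_mulVec, ← mulVec_transpose, hP.1.eq, hPz,
      zero_dotProduct]
  refine of_mulVec ?_ (fun v => ?_) fun v hv => ?_
  · rw [IsSymm, transpose_add, hP.1.eq, transpose_vecMulVec]
  · rw [hQv]
    exact Submodule.add_mem_sup (hP.mulVec_mem v)
      (Submodule.smul_mem _ _ (Submodule.mem_span_singleton_self z))
  · obtain ⟨s, hs, t, ht, rfl⟩ := Submodule.mem_sup.1 hv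
    obtain ⟨c, rfl⟩ := Submodule.mem_span_singleton.1 ht
    rw [hQv, mulVec_add, mulVec_smul, hP.mulVec_eq_self hs, hPz, dotProduct_add, hzS s hs,
      dotProduct_smul, hz, smul_zero, add_zero, zero_add, smul_eq_mul, mul_one]

end IsProjOnto

theorem gamma_increase_bound {n l : ℕ} (X₁ : Matrix (Fin n) (Fin l) ℝ) (x : Fin n → ℝ)
    (P P' : Matrix (Fin n) (Fin n) ℝ)
    (hP : IsProjOnto P (colSpan X₁))
    (hP' : IsProjOnto P' (colSpan (appendCol X₁ x)))
    (xperp : Fin n → ℝ) (hxp : xperp = x - P.mulVec x) (hxpne : xperp ≠ 0)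
    (z : Fin n → ℝ) (hz : z = (Real.sqrt (∑ i, xperp i ^ 2))⁻¹ • xperp) :
    0 ≤ gamma P' - gamma P ∧ gamma P' - gamma P ≤ ⨆ i : Fin n, (z i) ^ 2 := by
  have hPz : P *ᵥ z = 0 := by
    rw [hz, hxp, mulVec_smul, mulVec_sub, hP.mulVec_eq_self (hP.mulVec_mem x), sub_self,
      smul_zero]
  have hzz : z ⬝ᵥ z = 1 := hz ▸ inv_sqrt_sum_sq_smul_dotProduct_self hxpne
  have hscale : (Real.sqrt (∑ i, xperp i ^ 2))⁻¹ ≠ 0 := fun h => by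
    simp [hz, h] at hzz
  have hspan : colSpan (appendCol X₁ x) = colSpan X₁ ⊔ ℝ ∙ z := by
    rw [colSpan_appendCol, Submodule.sup_span_singleton_eq_of_sub_mem (y := xperp)
      (by rw [hxp, sub_sub_cancel]; exact hP.mulVec_mem x),
      hz, Submodule.span_singleton_smul_eq hscale.isUnit]
  have hP'_eq : P' = P + vecMulVec z z :=
    hP'.unique (hspan ▸ hP.add_vecMulVec hzz hPz)
  have hdiag : ∀ i, P' i i = P i i + z i ^ 2 := fun i => by
    rw [hP'_eq, Matrix.add_apply, vecMulVec_apply, sq]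
  rw [hP.gamma_eq_iSup_diag, hP'.gamma_eq_iSup_diag, sub_nonneg, sub_le_iff_le_add',
    iSup_congr hdiag]
  exact ⟨ciSup_mono (Finite.bddAbove_range _) fun i => le_add_of_nonneg_right (sq_nonneg _),
    Real.iSup_add_le_add_iSup _ _⟩
end
end

section
/- Let K be an n×n symmetric positive semidefinite matrix of rank r, partitioned with W the l×l top-left block and K₁ the first l columns, and suppose rank(W) = rank(K) = r. Then the Nyström reconstruction K₁W⁺K₁ᵀ equals K exactly, where W⁺ is the Moore–Penrose pseudoinverse of W. -/
/-!
Write `K = Bᵀ B` (a positive semidefinite matrix is a Gram matrix). The sampled columns of `B`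
have Gram matrix `W`, so they have rank `rank W = rank K = rank B`; hence they span the column
space of `B`, i.e. `B = B₁ C` for some `C`. Then `K = Cᵀ W C` and `K₁ = Cᵀ W`, and the Nyström
formula collapses to `Cᵀ W W⁺ W C = Cᵀ W C = K`.
-/

open Matrix

noncomputable section

namespace Matrix

variable {R m n l : Type*}

theorem range_mulVecLin_submatrix_id_le [CommSemiring R] [Fintype n] [Fintype l]
    (A : Matrix m n R) (f : l → n) :
    LinearMap.range (A.submatrix id f).mulVecLin ≤ LinearMap.range A.mulVecLin := by
  rw [range_mulVecLin, range_mulVecLin]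
  exact Submodule.span_mono (by rintro _ ⟨j, rfl⟩; exact ⟨f j, rfl⟩)

theorem exists_eq_mul_of_range_mulVecLin_le [CommSemiring R] [Fintype n] [Fintype l]
    {A : Matrix m n R} {B : Matrix m l R}
    (h : LinearMap.range A.mulVecLin ≤ LinearMap.range B.mulVecLin) :
    ∃ C : Matrix l n R, A = B * C := by
  classical
  have hcol : ∀ j, ∃ v, B *ᵥ v = A.col j := fun j =>
    h ⟨Pi.single j 1, mulVec_single_one A j⟩
  choose v hv using hcol
  refine ⟨(of v)ᵀ, ?_⟩
  ext i j
  exact (congrFun (hv j) i).symm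

theorem exists_eq_submatrix_id_mul_of_rank_eq [Field R] [Fintype n] [Fintype l]
    (A : Matrix m n R) (f : l → n) (h : (A.submatrix id f).rank = A.rank) :
    ∃ C : Matrix l n R, A = A.submatrix id f * C :=
  exists_eq_mul_of_range_mulVecLin_le
    (Submodule.eq_of_le_of_finrank_eq (range_mulVecLin_submatrix_id_le A f) h).ge

theorem transpose_mul_submatrix_id [CommSemiring R] [Fintype m] (B : Matrix m n R)
    (f : l → n) : (Bᵀ * B).submatrix id f = Bᵀ * B.submatrix id f :=
  submatrix_mul Bᵀ B id id f Function.bijective_id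

theorem transpose_mul_submatrix [CommSemiring R] [Fintype m] (B : Matrix m n R) (f : l → n) :
    (Bᵀ * B).submatrix f f = (B.submatrix id f)ᵀ * B.submatrix id f := by
  rw [submatrix_mul Bᵀ B f id f Function.bijective_id, ← transpose_submatrix]

theorem submatrix_mul_mul_transpose_eq_of_eq_submatrix_mul [CommSemiring R] [Fintype m]
    [Fintype l] (B : Matrix m n R) (f : l → n) {C : Matrix l n R} (hC : B = B.submatrix id f * C)
    {G : Matrix l l R} (hG : (Bᵀ * B).submatrix f f * G * (Bᵀ * B).submatrix f f
      = (Bᵀ * B).submatrix f f) :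
    (Bᵀ * B).submatrix id f * G * ((Bᵀ * B).submatrix id f)ᵀ = Bᵀ * B := by
  rw [transpose_mul_submatrix] at hG
  rw [transpose_mul_submatrix_id]
  set B₁ := B.submatrix id f
  clear_value B₁
  subst hC
  calc (B₁ * C)ᵀ * B₁ * G * ((B₁ * C)ᵀ * B₁)ᵀ = Cᵀ * (B₁ᵀ * B₁ * G * (B₁ᵀ * B₁)) * C := by
        simp only [transpose_mul, transpose_transpose, Matrix.mul_assoc]
    _ = (B₁ * C)ᵀ * (B₁ * C) := by
        rw [hG]
        simp only [transpose_mul, Matrix.mul_assoc]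

end Matrix

theorem nystrom_exact_reconstruction_general {n l r : ℕ} (hl : l ≤ n)
    (K : Matrix (Fin n) (Fin n) ℝ) (hK : K.PosSemidef) (hKr : K.rank = r)
    (K₁ : Matrix (Fin n) (Fin l) ℝ) (hK₁ : K₁ = K.submatrix id (Fin.castLE hl))
    (W : Matrix (Fin l) (Fin l) ℝ) (hW : W = K.submatrix (Fin.castLE hl) (Fin.castLE hl))
    (hWr : W.rank = r)
    (Wp : Matrix (Fin l) (Fin l) ℝ)
    (h1 : W * Wp * W = W) :
    K₁ * Wp * K₁ᵀ = K := by
  obtain ⟨B, rfl⟩ : ∃ B, K = Bᵀ * B := by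
    open scoped MatrixOrder in
    simpa [star_eq_conjTranspose] using CStarAlgebra.nonneg_iff_eq_star_mul_self.mp hK.nonneg
  subst hK₁ hW
  have hrank : (B.submatrix id (Fin.castLE hl)).rank = B.rank := by
    rw [← rank_transpose_mul_self, ← transpose_mul_submatrix, hWr, ← hKr,
      rank_transpose_mul_self]
  obtain ⟨C, hC⟩ := exists_eq_submatrix_id_mul_of_rank_eq B _ hrank
  exact submatrix_mul_mul_transpose_eq_of_eq_submatrix_mul B _ hC h1

theorem nystrom_exact_reconstruction {n l r : ℕ} (hl : l ≤ n)
    (K : Matrix (Fin n) (Fin n) ℝ) (hK : K.PosSemidef) (hKr : K.rank = r)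
    (K₁ : Matrix (Fin n) (Fin l) ℝ) (hK₁ : K₁ = K.submatrix id (Fin.castLE hl))
    (W : Matrix (Fin l) (Fin l) ℝ) (hW : W = K.submatrix (Fin.castLE hl) (Fin.castLE hl))
    (hWr : W.rank = r)
    (Wp : Matrix (Fin l) (Fin l) ℝ)
    (h1 : W * Wp * W = W) (h2 : Wp * W * Wp = Wp)
    (h3 : (W * Wp)ᵀ = W * Wp) (h4 : (Wp * W)ᵀ = Wp * W) :
    K₁ * Wp * K₁ᵀ = K :=
  nystrom_exact_reconstruction_general hl K hK hKr K₁ hK₁ W hW hWr Wp h1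
end
end
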